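/- (Stacking of the Calderón–Zygmund decomposition lemma.) Let A ⊆ B ⊆ Q₁ be Lebesgue measurable subsets of the unit cube in ℝⁿ and 0 < δ < 1. Assume (i) |A| ≤ δ, and (ii) for every dyadic cube Q ⊆ Q₁ with |A ∩ Q| > δ|Q|, the predecessor Q̃ of Q satisfies Q̃ ⊆ B. Then |A| ≤ δ|B|. -/

import Mathlib

/-
Call a dyadic cube maximal if it lies in `B` while its predecessor does not (or it is `Q₁`).
By (ii), a maximal cube `Q ≠ Q₁` has `|A ∩ Q| ≤ δ|Q|`, and by (i) so does `Q₁`. Dyadic cubes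
are balls of the sup metric, so Lebesgue's density theorem applies to them: almost every
`x ∈ A` lies in a dyadic cube in which `A` has density `> δ`, whose predecessor lies in `B` by
(ii), hence `x` lies in a maximal cube. Distinct maximal cubes are not nested, so their
half-open versions are disjoint, and summing over them gives `|A| ≤ δ ∑ |Q| ≤ δ|B|`.
-/

open MeasureTheory Set

/-- The dyadic cube of generation `i` with index `m : Fin n → ℕ` inside the unit cube:
`∏_j [m j / 2^i, (m j + 1) / 2^i]`.  Generation `0` with index `0` is the unit cube `Q₁`. -/
def dyadicCube (n i : ℕ) (m : Fin n → ℕ) : Set (Fin n → ℝ) :=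
  {x | ∀ j, (m j : ℝ) / 2 ^ i ≤ x j ∧ x j ≤ ((m j : ℝ) + 1) / 2 ^ i}

open Filter Metric
open scoped ENNReal Topology

theorem measure_inter_biUnion_le_mul {α ι : Type*} [MeasurableSpace α] {μ : Measure α}
    {A : Set α} (hA : MeasurableSet A) {T : Set ι} (hT : T.Countable) {S : ι → Set α}
    (hdisj : T.PairwiseDisjoint S) (hS : ∀ p ∈ T, MeasurableSet (S p)) {c : ℝ≥0∞}
    (h : ∀ p ∈ T, μ (A ∩ S p) ≤ c * μ (S p)) :
    μ (A ∩ ⋃ p ∈ T, S p) ≤ c * μ (⋃ p ∈ T, S p) := by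
  rw [inter_iUnion₂, measure_biUnion hT (hdisj.mono fun _ => inter_subset_right)
    fun p hp => hA.inter (hS p hp), measure_biUnion hT hdisj hS, ← ENNReal.tsum_mul_left]
  exact ENNReal.tsum_le_tsum fun p => h p p.2

def dyadicCubeIco (n i : ℕ) (m : Fin n → ℕ) : Set (Fin n → ℝ) :=
  pi univ fun j => Ico ((m j : ℝ) / 2 ^ i) (((m j : ℝ) + 1) / 2 ^ i)

section DyadicCubes

variable {n : ℕ}

theorem dyadicCube_eq_Icc (i : ℕ) (m : Fin n → ℕ) :
    dyadicCube n i m = Icc (fun j => (m j : ℝ) / 2 ^ i) (fun j => ((m j : ℝ) + 1) / 2 ^ i) := by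
  ext x; simp [dyadicCube, Pi.le_def, forall_and]

theorem dyadicCube_eq_closedBall (i : ℕ) (m : Fin n → ℕ) :
    dyadicCube n i m =
      closedBall (fun j => (2 * m j + 1 : ℝ) / 2 ^ (i + 1)) ((2 : ℝ) ^ (i + 1))⁻¹ := by
  rw [dyadicCube_eq_Icc, closedBall_pi _ (by positivity), ← pi_univ_Icc]
  refine pi_congr rfl fun j _ => ?_
  rw [Real.closedBall_eq_Icc]
  congr 1 <;> field_simp <;> ring

theorem volume_dyadicCube (i : ℕ) (m : Fin n → ℕ) :
    volume (dyadicCube n i m) = ENNReal.ofReal ((2 ^ i)⁻¹) ^ n := by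
  rw [dyadicCube_eq_Icc, Real.volume_Icc_pi]
  simp [add_div]

theorem volume_dyadicCube_ne_zero (i : ℕ) (m : Fin n → ℕ) : volume (dyadicCube n i m) ≠ 0 := by
  rw [volume_dyadicCube]; simp

theorem volume_dyadicCube_ne_top (i : ℕ) (m : Fin n → ℕ) : volume (dyadicCube n i m) ≠ ∞ := by
  rw [volume_dyadicCube]; simp

theorem dyadicCubeIco_subset_dyadicCube (i : ℕ) (m : Fin n → ℕ) :
    dyadicCubeIco n i m ⊆ dyadicCube n i m := by
  rw [dyadicCube_eq_Icc, ← pi_univ_Icc]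
  exact pi_mono fun _ _ => Ico_subset_Icc_self

theorem dyadicCubeIco_ae_eq_dyadicCube (i : ℕ) (m : Fin n → ℕ) :
    dyadicCubeIco n i m =ᵐ[volume] dyadicCube n i m := by
  rw [dyadicCube_eq_Icc]
  exact Measure.univ_pi_Ico_ae_eq_Icc

theorem measurableSet_dyadicCubeIco (i : ℕ) (m : Fin n → ℕ) :
    MeasurableSet (dyadicCubeIco n i m) :=
  .univ_pi fun _ => measurableSet_Ico

theorem dyadicCube_succ_subset (i : ℕ) (m : Fin n → ℕ) :
    dyadicCube n (i + 1) m ⊆ dyadicCube n i (fun j => m j / 2) := by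
  intro x hx j
  obtain ⟨h₁, h₂⟩ := hx j
  have hm : ((m j / 2 : ℕ) : ℝ) * 2 ≤ m j ∧ (m j : ℝ) + 1 ≤ ((m j / 2 : ℕ) + 1) * 2 := by
    constructor <;> norm_cast <;> omega
  rw [pow_succ] at h₁ h₂
  constructor
  · calc ((m j / 2 : ℕ) : ℝ) / 2 ^ i = ((m j / 2 : ℕ) : ℝ) * 2 / (2 ^ i * 2) := by field_simp
      _ ≤ m j / (2 ^ i * 2) := by gcongr; exact hm.1
      _ ≤ x j := h₁
  · calc x j ≤ (m j + 1) / (2 ^ i * 2) := h₂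
      _ ≤ ((m j / 2 : ℕ) + 1) * 2 / (2 ^ i * 2) := by gcongr; exact hm.2
      _ = ((m j / 2 : ℕ) + 1) / 2 ^ i := by field_simp

noncomputable def dyadicIndex (i : ℕ) (x : Fin n → ℝ) : Fin n → ℕ := fun j => ⌊x j * 2 ^ i⌋₊

theorem mem_dyadicCubeIco_iff {i : ℕ} {m : Fin n → ℕ} {x : Fin n → ℝ} :
    x ∈ dyadicCubeIco n i m ↔ ∀ j, (m j : ℝ) ≤ x j * 2 ^ i ∧ x j * 2 ^ i < m j + 1 := by
  simp only [dyadicCubeIco, mem_univ_pi, mem_Ico]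
  refine forall_congr' fun j => ?_
  rw [div_le_iff₀ (by positivity), lt_div_iff₀ (by positivity)]

theorem dyadicIndex_eq_of_mem {i : ℕ} {m : Fin n → ℕ} {x : Fin n → ℝ}
    (hx : x ∈ dyadicCubeIco n i m) : dyadicIndex i x = m := by
  funext j
  obtain ⟨h₁, h₂⟩ := mem_dyadicCubeIco_iff.1 hx j
  exact (Nat.floor_eq_iff ((Nat.cast_nonneg _).trans h₁)).2 ⟨h₁, h₂⟩

theorem mem_dyadicCubeIco_dyadicIndex {x : Fin n → ℝ} (hx : x ∈ dyadicCubeIco n 0 0) (i : ℕ) :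
    x ∈ dyadicCubeIco n i (dyadicIndex i x) := by
  refine mem_dyadicCubeIco_iff.2 fun j => ⟨Nat.floor_le ?_, Nat.lt_floor_add_one _⟩
  have h₀ : 0 ≤ x j := by simpa using (mem_dyadicCubeIco_iff.1 hx j).1
  positivity

theorem dyadicIndex_lt {x : Fin n → ℝ} (hx : x ∈ dyadicCubeIco n 0 0) (i : ℕ) (j : Fin n) :
    dyadicIndex i x j < 2 ^ i := by
  obtain ⟨h₀, h₁⟩ := mem_dyadicCubeIco_iff.1 hx j
  simp only [CharP.cast_eq_zero, pow_zero, mul_one, zero_add] at h₀ h₁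
  rw [dyadicIndex, Nat.floor_lt (by positivity)]
  push_cast
  exact mul_lt_of_lt_one_left (by positivity) h₁

theorem dyadicIndex_succ_div_two (i : ℕ) (x : Fin n → ℝ) (j : Fin n) :
    dyadicIndex (i + 1) x j / 2 = dyadicIndex i x j := by
  rw [dyadicIndex, dyadicIndex, ← Nat.floor_div_ofNat, pow_succ, ← mul_assoc,
    mul_div_cancel_right₀ _ two_ne_zero]

theorem antitone_dyadicCube_dyadicIndex (x : Fin n → ℝ) :
    Antitone fun i => dyadicCube n i (dyadicIndex i x) :=
  antitone_nat_of_succ_le fun i => by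
    simpa only [dyadicIndex_succ_div_two] using dyadicCube_succ_subset i (dyadicIndex (i + 1) x)

theorem ae_tendsto_volume_inter_dyadicCube_div (S : Set (Fin n → ℝ)) :
    ∀ᵐ x ∂volume.restrict S, ∀ m : ℕ → Fin n → ℕ, (∀ i, x ∈ dyadicCube n i (m i)) →
      Tendsto (fun i => volume (S ∩ dyadicCube n i (m i)) / volume (dyadicCube n i (m i)))
        atTop (𝓝 1) := by
  filter_upwards [IsUnifLocDoublingMeasure.ae_tendsto_measure_inter_div volume S 1]
    with x hx m hxm
  simp only [dyadicCube_eq_closedBall] at hxm ⊢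
  refine hx _ (fun i => ((2 : ℝ) ^ (i + 1))⁻¹) ?_ (.of_forall fun i => by simpa using hxm i)
  exact tendsto_inv_atTop_nhdsGT_zero.comp
    ((tendsto_pow_atTop_atTop_of_one_lt one_lt_two).comp (tendsto_add_atTop_nat 1))

def IsMaximalDyadicCube (B : Set (Fin n → ℝ)) (i : ℕ) (m : Fin n → ℕ) : Prop :=
  (∀ j, m j < 2 ^ i) ∧ dyadicCube n i m ⊆ B ∧
    ∀ k, i = k + 1 → ¬ dyadicCube n k (fun j => m j / 2) ⊆ B

theorem IsMaximalDyadicCube.le_of_subset {B : Set (Fin n → ℝ)} {i k : ℕ} {x : Fin n → ℝ}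
    (hi : IsMaximalDyadicCube B i (dyadicIndex i x))
    (hk : dyadicCube n k (dyadicIndex k x) ⊆ B) : i ≤ k := by
  by_contra! hki
  obtain ⟨i, rfl⟩ := Nat.exists_eq_add_one_of_ne_zero (by omega : i ≠ 0)
  refine hi.2.2 i rfl ?_
  simp only [dyadicIndex_succ_div_two]
  exact (antitone_dyadicCube_dyadicIndex x (by omega : k ≤ i)).trans hk

theorem pairwiseDisjoint_dyadicCubeIco_isMaximalDyadicCube (B : Set (Fin n → ℝ)) :
    {p : ℕ × (Fin n → ℕ) | IsMaximalDyadicCube B p.1 p.2}.PairwiseDisjoint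
      fun p => dyadicCubeIco n p.1 p.2 := by
  rintro ⟨i, m⟩ hp ⟨k, m'⟩ hq hne
  refine disjoint_left.2 fun x hx hx' => hne ?_
  obtain rfl : m = dyadicIndex i x := (dyadicIndex_eq_of_mem hx).symm
  obtain rfl : m' = dyadicIndex k x := (dyadicIndex_eq_of_mem hx').symm
  obtain rfl : i = k := le_antisymm (hp.le_of_subset hq.2.1) (hq.le_of_subset hp.2.1)
  rfl

theorem exists_isMaximalDyadicCube_dyadicIndex {B : Set (Fin n → ℝ)} {x : Fin n → ℝ}
    (hx : x ∈ dyadicCubeIco n 0 0) {i : ℕ} (hi : dyadicCube n i (dyadicIndex i x) ⊆ B) :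
    ∃ k, IsMaximalDyadicCube B k (dyadicIndex k x) := by
  classical
  have hex : ∃ i, dyadicCube n i (dyadicIndex i x) ⊆ B := ⟨i, hi⟩
  refine ⟨Nat.find hex, dyadicIndex_lt hx _, Nat.find_spec hex, fun k hk => ?_⟩
  have hlt : k < Nat.find hex := by omega
  rw [hk]
  simp only [dyadicIndex_succ_div_two]
  exact Nat.find_min hex hlt

theorem volume_inter_le_of_isMaximalDyadicCube {A B : Set (Fin n → ℝ)} {c : ℝ≥0∞}
    (hA : volume A ≤ c)
    (hpred : ∀ (i : ℕ) (m : Fin n → ℕ), (∀ j, m j < 2 ^ (i + 1)) →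
      c * volume (dyadicCube n (i + 1) m) < volume (A ∩ dyadicCube n (i + 1) m) →
      dyadicCube n i (fun j => m j / 2) ⊆ B)
    {i : ℕ} {m : Fin n → ℕ} (h : IsMaximalDyadicCube B i m) :
    volume (A ∩ dyadicCube n i m) ≤ c * volume (dyadicCube n i m) := by
  cases i with
  | zero =>
    obtain rfl : m = 0 := funext fun j => by simpa using h.1 j
    rw [volume_dyadicCube]
    simpa using (measure_mono inter_subset_left).trans hA
  | succ k => exact not_lt.1 fun hlt => h.2.2 k rfl (hpred k m h.1 hlt)

theorem ae_mem_biUnion_isMaximalDyadicCube {A B : Set (Fin n → ℝ)} (hAm : MeasurableSet A)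
    (hAQ : A ⊆ dyadicCube n 0 0) {c : ℝ≥0∞} (hc : c < 1)
    (hpred : ∀ (i : ℕ) (m : Fin n → ℕ), (∀ j, m j < 2 ^ (i + 1)) →
      c * volume (dyadicCube n (i + 1) m) < volume (A ∩ dyadicCube n (i + 1) m) →
      dyadicCube n i (fun j => m j / 2) ⊆ B) :
    ∀ᵐ x, x ∈ A → x ∈ ⋃ p ∈ {p : ℕ × (Fin n → ℕ) | IsMaximalDyadicCube B p.1 p.2},
      dyadicCubeIco n p.1 p.2 := by
  have hQ : ∀ᵐ x, x ∈ A → x ∈ dyadicCubeIco n 0 0 :=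
    (dyadicCubeIco_ae_eq_dyadicCube 0 0).symm.le.mono fun x hx hxA => hx (hAQ hxA)
  filter_upwards [hQ, (ae_restrict_iff' hAm).1 (ae_tendsto_volume_inter_dyadicCube_div A)]
    with x hxQ hdens hxA
  have hx := hxQ hxA
  obtain ⟨N, hN⟩ := eventually_atTop.1 <| (hdens hxA (dyadicIndex · x) fun i =>
    dyadicCubeIco_subset_dyadicCube _ _ (mem_dyadicCubeIco_dyadicIndex hx i)).eventually
      (lt_mem_nhds hc)
  have hi := hN (N + 1) N.le_succ
  rw [ENNReal.lt_div_iff_mul_lt (.inl (volume_dyadicCube_ne_zero _ _))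
    (.inl (volume_dyadicCube_ne_top _ _))] at hi
  have hsub := hpred N _ (dyadicIndex_lt hx _) hi
  simp only [dyadicIndex_succ_div_two] at hsub
  obtain ⟨k, hk⟩ := exists_isMaximalDyadicCube_dyadicIndex hx hsub
  exact mem_biUnion (x := (k, dyadicIndex k x)) hk (mem_dyadicCubeIco_dyadicIndex hx k)

end DyadicCubes

theorem calderon_zygmund_stacking_general (n : ℕ) (A B : Set (Fin n → ℝ))
    (hAm : MeasurableSet A)
    (hAB : A ⊆ B) (hBQ : B ⊆ dyadicCube n 0 0)
    (δ : ℝ) (hδ1 : δ < 1)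
    (hA : volume A ≤ ENNReal.ofReal δ)
    (hdyadic : ∀ (i : ℕ) (m : Fin n → ℕ), (∀ j, m j < 2 ^ (i + 1)) →
      ENNReal.ofReal δ * volume (dyadicCube n (i + 1) m) <
        volume (A ∩ dyadicCube n (i + 1) m) →
      dyadicCube n i (fun j => m j / 2) ⊆ B) :
    volume A ≤ ENNReal.ofReal δ * volume B := by
  set T := {p : ℕ × (Fin n → ℕ) | IsMaximalDyadicCube B p.1 p.2}
  set U := ⋃ p ∈ T, dyadicCubeIco n p.1 p.2
  have hUB : U ⊆ B :=
    iUnion₂_subset fun p hp => (dyadicCubeIco_subset_dyadicCube _ _).trans hp.2.1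
  have hAU : ∀ᵐ x, x ∈ A → x ∈ U :=
    ae_mem_biUnion_isMaximalDyadicCube hAm (hAB.trans hBQ) (ENNReal.ofReal_lt_one.2 hδ1) hdyadic
  have hdensity : ∀ p ∈ T, volume (A ∩ dyadicCubeIco n p.1 p.2) ≤
      ENNReal.ofReal δ * volume (dyadicCubeIco n p.1 p.2) := fun p hp => by
    rw [measure_congr (dyadicCubeIco_ae_eq_dyadicCube p.1 p.2)]
    grw [dyadicCubeIco_subset_dyadicCube]
    exact volume_inter_le_of_isMaximalDyadicCube hA hdyadic hp
  calc volume A ≤ volume (A ∩ U) := measure_mono_ae (hAU.mono fun x hx hxA => ⟨hxA, hx hxA⟩)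
    _ ≤ ENNReal.ofReal δ * volume U :=
      measure_inter_biUnion_le_mul hAm T.to_countable
        (pairwiseDisjoint_dyadicCubeIco_isMaximalDyadicCube B)
        (fun p _ => measurableSet_dyadicCubeIco _ _) hdensity
    _ ≤ ENNReal.ofReal δ * volume B := by gcongr

/-- Calderón–Zygmund stacking lemma.  If `A ⊆ B ⊆ Q₁`, `|A| ≤ δ`, and every
dyadic cube `Q` with `|A ∩ Q| > δ|Q|` has its predecessor `Q̃` contained in `B`, then
`|A| ≤ δ|B|`. -/
theorem calderon_zygmund_stacking (n : ℕ) (A B : Set (Fin n → ℝ))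
    (hAm : MeasurableSet A) (hBm : MeasurableSet B)
    (hAB : A ⊆ B) (hBQ : B ⊆ dyadicCube n 0 0)
    (δ : ℝ) (hδ0 : 0 < δ) (hδ1 : δ < 1)
    (hA : volume A ≤ ENNReal.ofReal δ)
    (hdyadic : ∀ (i : ℕ) (m : Fin n → ℕ), (∀ j, m j < 2 ^ (i + 1)) →
      ENNReal.ofReal δ * volume (dyadicCube n (i + 1) m) <
        volume (A ∩ dyadicCube n (i + 1) m) →
      dyadicCube n i (fun j => m j / 2) ⊆ B) :
    volume A ≤ ENNReal.ofReal δ * volume B :=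
  calderon_zygmund_stacking_general n A B hAm hAB hBQ δ hδ1 hA hdyadic
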